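/- Let c > 0 be fixed, let q = q(n) ≥ c·n, and let k = k(n) be a sequence of positive integers with k = o(n^{1/12}). Then the probability that the planted assembly of a random n×n puzzle with q jig types is k-good tends to 1 as n → ∞. -/

import Mathlib

open Finset Filter

noncomputable section

/-- A piece of the `n × n` puzzle, identified with its cell in the original grid. -/
abbrev Cell (n : ℕ) := Fin n × Fin n

/-- The unit vector in direction `d` (`0` = right, `1` = up, `2` = left, `3` = down). -/
def dirVec (d : ZMod 4) : ℤ × ℤ :=
  if d = 0 then (1, 0) else if d = 1 then (0, 1) else if d = 2 then (-1, 0) else (0, -1)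

/-- The integer coordinates of a cell. -/
def cellZ {n : ℕ} (c : Cell n) : ℤ × ℤ := ((c.1 : ℤ), (c.2 : ℤ))

/-- A carving assigns a jig type (one of `q` possibilities) to each of the four
(cyclically ordered) sides of each of the `n²` pieces. -/
abbrev Carving (n q : ℕ) := Cell n → ZMod 4 → Fin q

/-- A carving is valid if each pair of coincident sides of adjacent pieces of the
original grid receives complementary jig types (`ι` is the complementation involution). -/
def IsValidCarving {n q : ℕ} (ι : Fin q → Fin q) (ω : Carving n q) : Prop :=
  ∀ p p' : Cell n, ∀ d : ZMod 4,
    cellZ p' = cellZ p + dirVec d → ω p' (d + 2) = ι (ω p d)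

open scoped Classical in
/-- The probability of the event `P` for a carving chosen uniformly at random among
all valid carvings. -/
def puzzleProb {n q : ℕ} (ι : Fin q → Fin q) (P : Carving n q → Prop) : ℝ :=
  ((Finset.univ.filter fun ω : Carving n q => IsValidCarving ι ω ∧ P ω).card : ℝ) /
  ((Finset.univ.filter fun ω : Carving n q => IsValidCarving ι ω).card : ℝ)

/-- A complete assembly: a bijective placement of the pieces onto the cells of the
`n × n` grid together with an orientation (`ℤ/4`) for each piece. -/
structure Assembly (n : ℕ) where
  pos : Equiv.Perm (Cell n)
  rot : Cell n → ZMod 4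

/-- The planted assembly keeps every piece in its original position and orientation. -/
def planted (n : ℕ) : Assembly n := ⟨Equiv.refl _, fun _ => 0⟩

/-- A complete assembly is feasible for the carving `ω` if all pairs of abutting sides
carry complementary jig types.  The side of piece `p` facing direction `d` after `p` is
rotated by `A.rot p` quarter turns is its original side `d - A.rot p`. -/
def Assembly.Feasible {n q : ℕ} (ι : Fin q → Fin q) (A : Assembly n) (ω : Carving n q) :
    Prop :=
  ∀ p p' : Cell n, ∀ d : ZMod 4,
    cellZ (A.pos p') = cellZ (A.pos p) + dirVec d →
    ω p' (d + 2 - A.rot p') = ι (ω p (d - A.rot p))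

/-- The carving of the grid obtained by reassembling the pieces according to `A`:
side `d` of the grid cell `c` receives the jig type of the corresponding side of the
piece placed on `c`. -/
def Assembly.carving {n q : ℕ} (A : Assembly n) (ω : Carving n q) : Carving n q :=
  fun c d => ω (A.pos.symm c) (d - A.rot (A.pos.symm c))

/-- Rotation of the grid by 90 degrees. -/
def rotCell {n : ℕ} : Equiv.Perm (Cell n) where
  toFun c := (c.2.rev, c.1)
  invFun c := (c.2, c.1.rev)
  left_inv c := by simp
  right_inv c := by simp

/-- Global rotation of a carving of the grid by 90 degrees. -/
def rotateCarving {n q : ℕ} (ω : Carving n q) : Carving n q :=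
  fun c d => ω (rotCell.symm c) (d - 1)

/-- Two solutions are similar if they differ only by a global rotation of the puzzle,
a permutation of pieces with identical carvings, and rotations of pieces whose carving
is rotation-invariant; equivalently, if they induce the same carving of the grid up to
a global rotation. -/
def PuzzleSimilar {n q : ℕ} (A B : Assembly n) (ω : Carving n q) : Prop :=
  ∃ r : Fin 4, B.carving ω = rotateCarving^[r.val] (A.carving ω)

/-- The planted assembly rotated globally by `r` quarter turns. -/
def rotatedPlanted (n : ℕ) (r : Fin 4) : Assembly n :=
  ⟨rotCell ^ r.val, fun _ => (r.val : ZMod 4)⟩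

/-- The cell `c` belongs to the `k × k` window with lower-left corner `(a, b)`. -/
def inWindow {n : ℕ} (a b k : ℕ) (c : Cell n) : Prop :=
  a ≤ c.1.val ∧ c.1.val < a + k ∧ b ≤ c.2.val ∧ c.2.val < b + k

open scoped Classical in
/-- The number of dual edges of the `k × k` window at `(a, b)` (each dual edge recorded
once, as `(c, c', d)` with `d ∈ {right, up}`) whose abutting jig types, for the carving
induced by the assembly `A`, form the complementary pair `{j, ι j}`. -/
def windowTypeCount {n q : ℕ} (ι : Fin q → Fin q) (A : Assembly n) (ω : Carving n q)
    (a b k : ℕ) (j : Fin q) : ℕ :=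
  (Finset.univ.filter fun x : Cell n × Cell n × Fin 2 =>
    inWindow a b k x.1 ∧ inWindow a b k x.2.1 ∧
    cellZ x.2.1 = cellZ x.1 + dirVec (x.2.2.val : ZMod 4) ∧
    (A.carving ω x.1 (x.2.2.val : ZMod 4) = j ∨
      A.carving ω x.1 (x.2.2.val : ZMod 4) = ι j)).card

open scoped Classical in
/-- The shape multiplicity of the `k × k` window at `(a, b)`: the sum, over unordered
complementary pairs `J = {j, ι j}`, of `⌊(number of dual edges of the window of type J)/2⌋`. -/
def windowSM {n q : ℕ} (ι : Fin q → Fin q) (A : Assembly n) (ω : Carving n q)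
    (a b k : ℕ) : ℕ :=
  ∑ j ∈ Finset.univ.filter (fun j : Fin q => j ≤ ι j),
    windowTypeCount ι A ω a b k j / 2

/-- A feasible complete assembly is `k`-good if every `k × k` window touching the boundary
of the puzzle has shape multiplicity at most `1`, and every other `k × k` window has shape
multiplicity at most `2`. -/
def KGood {n q : ℕ} (ι : Fin q → Fin q) (A : Assembly n) (ω : Carving n q) (k : ℕ) :
    Prop :=
  A.Feasible ι ω ∧
    ∀ a b : ℕ, a + k ≤ n → b + k ≤ n →
      windowSM ι A ω a b k ≤ 2 ∧
      ((a = 0 ∨ b = 0 ∨ a + k = n ∨ b + k = n) → windowSM ι A ω a b k ≤ 1)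

/-- A partial assembly: an injective placement of a subset of the pieces into the square
grid `ℤ²`, together with an orientation for each placed piece. -/
structure PartialAssembly (n : ℕ) where
  pieces : Finset (Cell n)
  pos : Cell n → ℤ × ℤ
  rot : Cell n → ZMod 4
  pos_inj : ∀ p ∈ pieces, ∀ p' ∈ pieces, pos p = pos p' → p = p'

/-- A partial assembly is feasible for `ω` if all pairs of abutting sides carry
complementary jig types. -/
def PartialAssembly.Feasible {n q : ℕ} (ι : Fin q → Fin q) (A : PartialAssembly n)
    (ω : Carving n q) : Prop :=
  ∀ p ∈ A.pieces, ∀ p' ∈ A.pieces, ∀ d : ZMod 4,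
    A.pos p' = A.pos p + dirVec d →
    ω p' (d + 2 - A.rot p') = ι (ω p (d - A.rot p))

open scoped Classical in
/-- The edges of the contour graph `C(A)`: the dual edges of `A` (each recorded once, as
`(p, p', d)` with `d ∈ {right, up}`, `p'` being placed in direction `d` from `p`) whose two
abutting piece sides are not coincident in the planted assembly. -/
def contourEdges {n : ℕ} (A : PartialAssembly n) : Finset (Cell n × Cell n × Fin 2) :=
  Finset.univ.filter fun x =>
    x.1 ∈ A.pieces ∧ x.2.1 ∈ A.pieces ∧
    A.pos x.2.1 = A.pos x.1 + dirVec (x.2.2.val : ZMod 4) ∧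
    ¬ (A.rot x.2.1 = A.rot x.1 ∧
        cellZ x.2.1 = cellZ x.1 + dirVec ((x.2.2.val : ZMod 4) - A.rot x.1))

/-- The piece sides lying across the edges of the contour graph of `A`. -/
def crossingSides {n : ℕ} (A : PartialAssembly n) : Set (Cell n × ZMod 4) :=
  {ps | ∃ x ∈ contourEdges A,
    ps = (x.1, (x.2.2.val : ZMod 4) - A.rot x.1) ∨
    ps = (x.2.1, (x.2.2.val : ZMod 4) + 2 - A.rot x.2.1)}

/-- Two piece sides are coincident in the planted assembly. -/
def CoincidentPlanted {n : ℕ} (ps ps' : Cell n × ZMod 4) : Prop :=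
  cellZ ps'.1 = cellZ ps.1 + dirVec ps.2 ∧ ps'.2 = ps.2 + 2

open scoped Classical in
/-- The shape multiplicity `sm(C(A), ω)` of the contour graph of `A` with respect to `ω`:
the sum, over unordered complementary pairs `J = {j, ι j}`, of
`⌊(number of contour edges of type J)/2⌋`. -/
def contourSM {n q : ℕ} (ι : Fin q → Fin q) (A : PartialAssembly n) (ω : Carving n q) :
    ℕ :=
  ∑ j ∈ Finset.univ.filter (fun j : Fin q => j ≤ ι j),
    ((contourEdges A).filter fun x =>
      ω x.1 ((x.2.2.val : ZMod 4) - A.rot x.1) = j ∨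
      ω x.1 ((x.2.2.val : ZMod 4) - A.rot x.1) = ι j).card / 2

end

/-!
In the planted assembly, a window of shape multiplicity at least `t` contains `t` disjoint
pairs of dual edges, the two edges of each pair having equal or complementary jig types. In a
uniformly random valid carving, resampling the jig type of one dual edge (together with its
complementary side) preserves validity, so a prescribed family of `t` disjoint pairs is matched
with probability at most `(2 / q)ᵗ`; a `k × k` window has at most `(4 k⁴)ᵗ` such families. A
union bound over the `n²` windows with `t = 3` and the at most `4 n` boundary windows with
`t = 2` bounds the failure probability by `n² (8 k⁴)³ / q³ + 4 n (8 k⁴)² / q² = O(k¹² / n)`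
for `q ≥ c n`, and `k¹² / n → 0` because `k = o(n^{1/12})`.
-/

open scoped Classical

lemma Function.Involutive.eq_of_le_of_le {α : Type*} [LinearOrder α] {f : α → α}
    (hf : Function.Involutive f) {j j' v : α} (hj : j ≤ f j) (hj' : j' ≤ f j')
    (h : v = j ∨ v = f j) (h' : v = j' ∨ v = f j') : j = j' := by
  have := hf j
  have := hf j'
  grind

lemma Function.Involutive.eq_or_eq_apply {α : Type*} {f : α → α} (hf : Function.Involutive f)
    {j v w : α} (hv : v = j ∨ v = f j) (hw : w = j ∨ w = f j) : w = v ∨ w = f v := by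
  rcases hv with rfl | rfl <;> rcases hw with rfl | rfl <;> simp [hf _]

def IsPairing {α : Type*} (P : Finset (α × α)) : Prop :=
  (∀ p ∈ P, p.1 ≠ p.2) ∧ (P : Set (α × α)).PairwiseDisjoint fun p => ({p.1, p.2} : Set α)

lemma isPairing_insert {α : Type*} [DecidableEq α] {p : α × α} {P : Finset (α × α)} :
    IsPairing (insert p P) ↔
      IsPairing P ∧ p.1 ≠ p.2 ∧
        ∀ p' ∈ P, p ≠ p' → Disjoint ({p.1, p.2} : Set α) {p'.1, p'.2} := by
  simp only [IsPairing, coe_insert, Set.pairwiseDisjoint_insert, mem_insert, forall_eq_or_imp,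
    mem_coe]
  tauto

lemma exists_isPairing_card_eq {α β : Type*} [DecidableEq α] (s : Finset β) (t : ℕ)
    (F : β → Finset α) (hF : (s : Set β).PairwiseDisjoint F)
    (ht : t ≤ ∑ j ∈ s, #(F j) / 2) :
    ∃ P : Finset (α × α), #P = t ∧ IsPairing P ∧ ∀ p ∈ P, ∃ j ∈ s, p.1 ∈ F j ∧ p.2 ∈ F j := by
  induction t generalizing F with
  | zero => exact ⟨∅, rfl, ⟨by simp, by simp⟩, by simp⟩
  | succ t ih =>
    obtain ⟨j₀, hj₀, hcard⟩ : ∃ j ∈ s, 2 ≤ #(F j) := by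
      by_contra! h
      have : ∑ j ∈ s, #(F j) / 2 = 0 := sum_eq_zero fun j hj => Nat.div_eq_of_lt (h j hj)
      omega
    obtain ⟨x, hx, y, hy, hxy⟩ := one_lt_card.1 hcard
    have hxyF : {x, y} ⊆ F j₀ := insert_subset hx (singleton_subset_iff.2 hy)
    set F' : β → Finset α := fun j => F j \ {x, y}
    have hsum : ∑ j ∈ s, #(F j) / 2 ≤ ∑ j ∈ s, #(F' j) / 2 + 1 := by
      have hrest : ∀ j ∈ s.erase j₀, F' j = F j := fun j hj =>
        sdiff_eq_self_of_disjoint (disjoint_of_subset_right hxyF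
          (hF (mem_of_mem_erase hj) hj₀ (ne_of_mem_erase hj)))
      have hj₀' : #(F' j₀) = #(F j₀) - 2 := by
        rw [card_sdiff_of_subset hxyF, card_pair hxy]
      rw [← add_sum_erase s (fun j => #(F j) / 2) hj₀, ← add_sum_erase s (fun j => #(F' j) / 2) hj₀,
        sum_congr rfl fun j hj => by rw [← hrest j hj], hj₀']
      omega
    obtain ⟨P, hPcard, hP, hPF⟩ :=
      ih F' (hF.mono fun j => sdiff_subset) (by omega)
    have hfresh : ∀ p ∈ P, p.1 ≠ x ∧ p.1 ≠ y ∧ p.2 ≠ x ∧ p.2 ≠ y := by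
      intro p hp
      obtain ⟨j, -, h1, h2⟩ := hPF p hp
      simp only [F', Finset.mem_sdiff, mem_insert, mem_singleton] at h1 h2
      tauto
    have hxyP : (x, y) ∉ P := fun h => (hfresh _ h).1 rfl
    refine ⟨insert (x, y) P, by rw [card_insert_of_notMem hxyP, hPcard],
      isPairing_insert.2 ⟨hP, hxy, fun p hp _ => ?_⟩, ?_⟩
    · have := hfresh p hp
      simp only [Set.disjoint_insert_left, Set.disjoint_singleton_left, Set.mem_insert_iff,
        Set.mem_singleton_iff]
      tauto
    · simp only [mem_insert, forall_eq_or_imp]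
      exact ⟨⟨j₀, hj₀, hx, hy⟩, fun p hp => (hPF p hp).imp fun j ⟨hj, h1, h2⟩ =>
        ⟨hj, sdiff_subset h1, sdiff_subset h2⟩⟩

section Sides

variable {n q : ℕ}

lemma cellZ_injective : Function.Injective (cellZ (n := n)) := by
  intro c c' h
  simp only [cellZ, Prod.mk.injEq, Nat.cast_inj, Fin.val_inj] at h
  exact Prod.ext h.1 h.2

lemma dirVec_add_two (d : ZMod 4) : dirVec (d + 2) = -dirVec d := by
  revert d; decide

namespace CoincidentPlanted

variable {s s' s'' : Cell n × ZMod 4}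

lemma symm (h : CoincidentPlanted s s') : CoincidentPlanted s' s := by
  have h22 : s'.2 + 2 = s.2 := by rw [h.2, add_assoc, show (2 + 2 : ZMod 4) = 0 from rfl, add_zero]
  refine ⟨?_, h22.symm⟩
  rw [h.1, ← h22, dirVec_add_two, neg_add_cancel_right]

lemma right_unique (h : CoincidentPlanted s s') (h' : CoincidentPlanted s s'') : s' = s'' :=
  Prod.ext (cellZ_injective (h.1.trans h'.1.symm)) (h.2.trans h'.2.symm)

lemma left_unique (h : CoincidentPlanted s s'') (h' : CoincidentPlanted s' s'') : s = s' :=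
  h.symm.right_unique h'.symm

lemma ne (h : CoincidentPlanted s s') : s ≠ s' := by
  rintro rfl
  exact (by decide : ∀ d : ZMod 4, d + 2 ≠ d) _ h.2.symm

end CoincidentPlanted

lemma isValidCarving_iff (ι : Fin q → Fin q) (ω : Carving n q) :
    IsValidCarving ι ω ↔
      ∀ s s', CoincidentPlanted s s' → Function.uncurry ω s' = ι (Function.uncurry ω s) := by
  refine ⟨fun h s s' hs => ?_, fun h p p' d hd => h (p, d) (p', d + 2) ⟨hd, rfl⟩⟩
  obtain ⟨c', d'⟩ := s'
  obtain ⟨hs, rfl⟩ := hs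
  exact h _ _ _ hs

def setSides (ι : Fin q → Fin q) (s s' : Cell n × ZMod 4) (u : Fin q) (ω : Carving n q) :
    Carving n q :=
  Function.curry (Function.update (Function.update (Function.uncurry ω) s u) s' (ι u))

variable {ι : Fin q → Fin q} {s s' r : Cell n × ZMod 4} {u u' : Fin q} {ω : Carving n q}

lemma setSides_apply_left (h : CoincidentPlanted s s') :
    Function.uncurry (setSides ι s s' u ω) s = u := by
  simp [setSides, Function.update_of_ne h.ne]

lemma setSides_apply_of_ne (hs : r ≠ s) (hs' : r ≠ s') :
    Function.uncurry (setSides ι s s' u ω) r = Function.uncurry ω r := by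
  simp [setSides, Function.update_of_ne hs, Function.update_of_ne hs']

lemma setSides_setSides : setSides ι s s' u (setSides ι s s' u' ω) = setSides ι s s' u ω := by
  funext c d
  simp only [setSides, Function.curry_apply, Function.uncurry_curry, Function.update_apply]
  split_ifs <;> rfl

lemma setSides_self (hω : IsValidCarving ι ω) (h : CoincidentPlanted s s') :
    setSides ι s s' (Function.uncurry ω s) ω = ω := by
  rw [setSides, ← (isValidCarving_iff ι ω).1 hω s s' h, Function.update_eq_self,
    Function.update_eq_self, Function.curry_uncurry]

lemma IsValidCarving.setSides (hι : Function.Involutive ι) (hω : IsValidCarving ι ω)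
    (h : CoincidentPlanted s s') (u : Fin q) : IsValidCarving ι (setSides ι s s' u ω) := by
  rw [isValidCarving_iff] at hω ⊢
  intro r r' hr
  by_cases hrs : r = s
  · subst hrs
    rw [← hr.right_unique h, setSides_apply_left hr]
    simp [setSides]
  by_cases hrs' : r = s'
  · subst hrs'
    rw [hr.right_unique h.symm, setSides_apply_left h]
    simp [setSides, hι u]
  rw [setSides_apply_of_ne hrs hrs', setSides_apply_of_ne
    (fun h' => hrs' (hr.left_unique (by rw [h']; exact h.symm)))
    (fun h' => hrs (hr.left_unique (by rw [h']; exact h)))]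
  exact hω r r' hr

end Sides

/-- `(c, c', d)`: the dual edge between `c` and its neighbour `c'` in direction
`d ∈ {right, up}`, encoded as in `windowTypeCount`. -/
abbrev DualEdge (n : ℕ) := Cell n × Cell n × Fin 2

namespace DualEdge

variable {n q : ℕ} {ι : Fin q → Fin q}

def src (x : DualEdge n) : Cell n × ZMod 4 := (x.1, (x.2.2.val : ZMod 4))

def tgt (x : DualEdge n) : Cell n × ZMod 4 := (x.2.1, (x.2.2.val : ZMod 4) + 2)

def IsGrid (x : DualEdge n) : Prop := cellZ x.2.1 = cellZ x.1 + dirVec (x.2.2.val : ZMod 4)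

def jigType (ω : Carving n q) (x : DualEdge n) : Fin q := Function.uncurry ω x.src

def SameType (ι : Fin q → Fin q) (ω : Carving n q) (x y : DualEdge n) : Prop :=
  y.jigType ω = x.jigType ω ∨ y.jigType ω = ι (x.jigType ω)

lemma IsGrid.coincidentPlanted {x : DualEdge n} (hx : x.IsGrid) :
    CoincidentPlanted x.src x.tgt :=
  ⟨hx, rfl⟩

lemma src_ne_tgt (x y : DualEdge n) : x.src ≠ y.tgt := by
  have : ∀ d e : Fin 2, (d.val : ZMod 4) ≠ (e.val : ZMod 4) + 2 := by decide
  exact fun h => this _ _ (congrArg Prod.snd h)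

lemma eq_of_src_eq {x y : DualEdge n} (hx : x.IsGrid) (hy : y.IsGrid) (h : x.src = y.src) :
    x = y := by
  have hcast : ∀ d e : Fin 2, (d.val : ZMod 4) = (e.val : ZMod 4) → d = e := by decide
  have htgt : x.tgt = y.tgt := hx.coincidentPlanted.right_unique (h ▸ hy.coincidentPlanted)
  exact Prod.ext (congrArg Prod.fst h :)
    (Prod.ext (congrArg Prod.fst htgt :) (hcast _ _ (congrArg Prod.snd h)))

variable {x y : DualEdge n} {ω : Carving n q} {u : Fin q}

lemma jigType_setSides_self (hy : y.IsGrid) :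
    y.jigType (setSides ι y.src y.tgt u ω) = u :=
  setSides_apply_left hy.coincidentPlanted

lemma jigType_setSides_of_src_ne (h : x.src ≠ y.src) :
    x.jigType (setSides ι y.src y.tgt u ω) = x.jigType ω :=
  setSides_apply_of_ne h (src_ne_tgt x y)

lemma setSides_jigType_self (hω : IsValidCarving ι ω) (hy : y.IsGrid) :
    setSides ι y.src y.tgt (y.jigType ω) ω = ω :=
  setSides_self hω hy.coincidentPlanted

lemma sameType_setSides_iff {x y z : DualEdge n} {ω : Carving n q} {u : Fin q}
    (hx : x.src ≠ z.src) (hy : y.src ≠ z.src) :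
    SameType ι (setSides ι z.src z.tgt u ω) x y ↔ SameType ι ω x y := by
  rw [SameType, SameType, jigType_setSides_of_src_ne hx, jigType_setSides_of_src_ne hy]

end DualEdge

open DualEdge

section Estimates

variable {n q : ℕ} {ι : Fin q → Fin q}


/-- Resampling the jig type `u` of `y` and recording whether `y` had the type of `x` or its
complement is injective, so `y` has the type of `x` with probability at most `2 / q`. -/
lemma card_filter_sameType_mul_le {x y : DualEdge n} (hy : y.IsGrid) (hxy : x.src ≠ y.src)
    {A : Finset (Carving n q)} (hA : ∀ ω ∈ A, IsValidCarving ι ω)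
    (hAy : ∀ ω ∈ A, ∀ u, setSides ι y.src y.tgt u ω ∈ A) :
    #{ω ∈ A | SameType ι ω x y} * q ≤ 2 * #A := by
  have key := card_le_card_of_injOn (s := {ω ∈ A | SameType ι ω x y} ×ˢ (univ : Finset (Fin q)))
    (t := A ×ˢ (univ : Finset (Fin 2)))
    (fun p => (setSides ι y.src y.tgt p.2 p.1, if y.jigType p.1 = x.jigType p.1 then 0 else 1))
    (fun p hp => by
      simp only [coe_product, coe_filter, Set.mem_prod, Set.mem_ofPred_eq] at hp ⊢
      exact ⟨hAy p.1 hp.1.1 p.2, by simp⟩) ?_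
  · simpa [card_product, mul_comm] using key
  rintro ⟨ω₁, u₁⟩ h₁ ⟨ω₂, u₂⟩ h₂ heq
  simp only [coe_product, coe_filter, Set.mem_prod, Set.mem_ofPred_eq] at h₁ h₂
  simp only [Prod.mk.injEq] at heq
  obtain ⟨hset, hbit⟩ := heq
  have hu : u₁ = u₂ := by
    rw [← jigType_setSides_self (ι := ι) (u := u₁) (ω := ω₁) hy, hset, jigType_setSides_self hy]
  have hx : x.jigType ω₁ = x.jigType ω₂ := by
    rw [← jigType_setSides_of_src_ne (u := u₁) hxy, hset, jigType_setSides_of_src_ne hxy]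
  have hy' : y.jigType ω₁ = y.jigType ω₂ := by
    rcases h₁.1.2 with h₁' | h₁' <;> rcases h₂.1.2 with h₂' | h₂' <;>
      simp_all
  have hω : ω₁ = ω₂ := by
    rw [← setSides_jigType_self (hA ω₁ h₁.1.1) hy, ← setSides_setSides (u' := u₁), hset, hy',
      setSides_setSides, setSides_jigType_self (hA ω₂ h₂.1.1) hy]
  rw [hω, hu]

lemma card_sameType_forall_mul_le (hι : Function.Involutive ι)
    {P : Finset (DualEdge n × DualEdge n)} (hP : IsPairing P)
    (hgrid : ∀ p ∈ P, p.1.IsGrid ∧ p.2.IsGrid) :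
    #{ω : Carving n q | IsValidCarving ι ω ∧ ∀ p ∈ P, SameType ι ω p.1 p.2} * q ^ #P ≤
      2 ^ #P * #{ω : Carving n q | IsValidCarving ι ω} := by
  induction P using Finset.induction_on with
  | empty => simp
  | insert p P hp ih =>
    obtain ⟨hP', hp12, hdisj⟩ := isPairing_insert.1 hP
    obtain ⟨hp1, hp2⟩ := hgrid p (mem_insert_self p P)
    set A := ({ω | IsValidCarving ι ω ∧ ∀ p ∈ P, SameType ι ω p.1 p.2} : Finset (Carving n q))
    have hsrc_ne : ∀ p' ∈ P, p'.1.src ≠ p.2.src ∧ p'.2.src ≠ p.2.src := by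
      intro p' hp'
      have hne := Set.disjoint_left.1 (hdisj p' hp' (ne_of_mem_of_not_mem hp' hp).symm)
        (Set.mem_insert_of_mem _ rfl)
      obtain ⟨hq1, hq2⟩ := hgrid p' (mem_insert_of_mem hp')
      exact ⟨fun h => hne (Or.inl (eq_of_src_eq hq1 hp2 h).symm),
        fun h => hne (Or.inr (Set.mem_singleton_iff.2 (eq_of_src_eq hq2 hp2 h).symm))⟩
    have hstep : #{ω ∈ A | SameType ι ω p.1 p.2} * q ≤ 2 * #A := by
      refine card_filter_sameType_mul_le hp2 (fun h => hp12 (eq_of_src_eq hp1 hp2 h))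
        (fun ω hω => (mem_filter.1 hω).2.1) fun ω hω u => ?_
      obtain ⟨hvalid, hsame⟩ := (mem_filter.1 hω).2
      refine mem_filter.2 ⟨mem_univ _, hvalid.setSides hι hp2.coincidentPlanted u,
        fun p' hp' => ?_⟩
      exact (sameType_setSides_iff (hsrc_ne p' hp').1 (hsrc_ne p' hp').2).2 (hsame p' hp')
    have hfilter : ({ω | IsValidCarving ι ω ∧ ∀ p' ∈ insert p P, SameType ι ω p'.1 p'.2} :
        Finset (Carving n q)) = {ω ∈ A | SameType ι ω p.1 p.2} := by
      ext ω
      simp only [A, mem_filter, mem_univ, true_and, forall_mem_insert]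
      tauto
    rw [hfilter, card_insert_of_notMem hp, pow_succ, pow_succ]
    calc #{ω ∈ A | SameType ι ω p.1 p.2} * (q ^ #P * q)
        = #{ω ∈ A | SameType ι ω p.1 p.2} * q * q ^ #P := by ring
      _ ≤ 2 * #A * q ^ #P := by gcongr
      _ = 2 * (#A * q ^ #P) := by ring
      _ ≤ 2 * (2 ^ #P * #{ω : Carving n q | IsValidCarving ι ω}) :=
        Nat.mul_le_mul_left 2 (ih hP' fun p' hp' => hgrid p' (mem_insert_of_mem hp'))
      _ = 2 ^ #P * 2 * #{ω : Carving n q | IsValidCarving ι ω} := by ring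

noncomputable def windowEdges (n a b k : ℕ) : Finset (DualEdge n) :=
  {x | inWindow a b k x.1 ∧ inWindow a b k x.2.1 ∧ x.IsGrid}

lemma card_windowEdges_le (a b k : ℕ) : #(windowEdges n a b k) ≤ 2 * k ^ 2 := by
  have key := card_le_card_of_injOn (s := windowEdges n a b k)
    (t := (range k ×ˢ range k) ×ˢ (univ : Finset (Fin 2)))
    (fun x => ((x.1.1.val - a, x.1.2.val - b), x.2.2))
    (fun x hx => by
      obtain ⟨-, ⟨h1, h2, h3, h4⟩, -⟩ := mem_filter.1 (mem_coe.1 hx)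
      simp only [coe_product, coe_range, Set.mem_prod, Set.mem_Iio, coe_univ, Set.mem_univ,
        and_true]
      omega)
    (fun x hx y hy hxy => by
      obtain ⟨-, ⟨hxa, -, hxb, -⟩, -, hx⟩ := mem_filter.1 (mem_coe.1 hx)
      obtain ⟨-, ⟨hya, -, hyb, -⟩, -, hy⟩ := mem_filter.1 (mem_coe.1 hy)
      simp only [Prod.mk.injEq] at hxy
      have h1 : x.1 = y.1 := Prod.ext (Fin.ext (by omega)) (Fin.ext (by omega))
      exact eq_of_src_eq hx hy (by simp [src, h1, hxy.2]))
  simpa [card_product, mul_comm, ← sq] using key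

lemma planted_carving (ω : Carving n q) : (planted n).carving ω = ω := by
  funext c d
  simp [Assembly.carving, planted]

lemma windowSM_planted (ι : Fin q → Fin q) (ω : Carving n q) (a b k : ℕ) :
    windowSM ι (planted n) ω a b k = ∑ j ∈ univ.filter (fun j => j ≤ ι j),
      #{x ∈ windowEdges n a b k | x.jigType ω = j ∨ x.jigType ω = ι j} / 2 := by
  refine sum_congr rfl fun j _ => ?_
  rw [windowTypeCount, windowEdges, filter_filter, planted_carving]
  congr 2
  ext x
  simp [and_assoc, IsGrid, jigType, src]

lemma card_le_windowSM_mul_le (hι : Function.Involutive ι) (t a b k : ℕ) :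
    #{ω : Carving n q | IsValidCarving ι ω ∧ t ≤ windowSM ι (planted n) ω a b k} * q ^ t ≤
      (8 * k ^ 4) ^ t * #{ω : Carving n q | IsValidCarving ι ω} := by
  set E := windowEdges n a b k
  set V := ({ω | IsValidCarving ι ω} : Finset (Carving n q))
  set pairings := {P ∈ (E ×ˢ E).powersetCard t | IsPairing P}
  set M : Finset (DualEdge n × DualEdge n) → Finset (Carving n q) :=
    fun P => {ω | IsValidCarving ι ω ∧ ∀ p ∈ P, SameType ι ω p.1 p.2}
  have hcover : ({ω | IsValidCarving ι ω ∧ t ≤ windowSM ι (planted n) ω a b k} :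
      Finset (Carving n q)) ⊆ pairings.biUnion M := by
    intro ω hω
    simp only [mem_filter, mem_univ, true_and] at hω
    obtain ⟨hvalid, ht⟩ := hω
    rw [windowSM_planted] at ht
    have hdisj : ((univ.filter fun j => j ≤ ι j : Finset (Fin q)) : Set (Fin q)).PairwiseDisjoint
        fun j => {x ∈ E | x.jigType ω = j ∨ x.jigType ω = ι j} := by
      intro j hj j' hj' hne
      refine disjoint_filter.2 fun x _ h h' => hne ?_
      simp only [coe_filter, mem_univ, true_and, Set.mem_ofPred_eq] at hj hj'
      exact hι.eq_of_le_of_le hj hj' h h'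
    obtain ⟨P, hcard, hP, hPF⟩ := exists_isPairing_card_eq _ t _ hdisj ht
    refine mem_biUnion.2 ⟨P, mem_filter.2 ⟨mem_powersetCard.2 ⟨fun p hp => ?_, hcard⟩, hP⟩,
      mem_filter.2 ⟨mem_univ _, hvalid, fun p hp => ?_⟩⟩
    · obtain ⟨j, -, h1, h2⟩ := hPF p hp
      exact mem_product.2 ⟨(mem_filter.1 h1).1, (mem_filter.1 h2).1⟩
    · obtain ⟨j, -, h1, h2⟩ := hPF p hp
      exact hι.eq_or_eq_apply (mem_filter.1 h1).2 (mem_filter.1 h2).2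
  have hM : ∀ P ∈ pairings, #(M P) * q ^ t ≤ 2 ^ t * #V := by
    intro P hP
    obtain ⟨hPE, hcard⟩ := mem_powersetCard.1 (mem_filter.1 hP).1
    rw [← hcard]
    refine card_sameType_forall_mul_le hι (mem_filter.1 hP).2 fun p hp => ?_
    obtain ⟨h1, h2⟩ := mem_product.1 (hPE hp)
    exact ⟨(mem_filter.1 h1).2.2.2, (mem_filter.1 h2).2.2.2⟩
  have hpairings : #pairings ≤ (4 * k ^ 4) ^ t := calc
    #pairings ≤ #((E ×ˢ E).powersetCard t) := card_filter_le _ _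
    _ ≤ (#E * #E) ^ t := by rw [card_powersetCard, card_product]; exact Nat.choose_le_pow _ _
    _ ≤ (2 * k ^ 2 * (2 * k ^ 2)) ^ t := by gcongr <;> exact card_windowEdges_le a b k
    _ = (4 * k ^ 4) ^ t := by ring
  calc _ ≤ #(pairings.biUnion M) * q ^ t := by gcongr
    _ ≤ (∑ P ∈ pairings, #(M P)) * q ^ t := by gcongr; exact card_biUnion_le
    _ = ∑ P ∈ pairings, #(M P) * q ^ t := sum_mul _ _ _
    _ ≤ ∑ _P ∈ pairings, 2 ^ t * #V := sum_le_sum hM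
    _ = #pairings * (2 ^ t * #V) := by rw [sum_const, smul_eq_mul]
    _ ≤ (4 * k ^ 4) ^ t * (2 ^ t * #V) := by gcongr
    _ = (8 * k ^ 4) ^ t * #V := by rw [← mul_assoc, ← mul_pow]; ring

lemma IsValidCarving.feasible_planted {ω : Carving n q} (hω : IsValidCarving ι ω) :
    (planted n).Feasible ι ω := by
  intro p p' d h
  simpa [planted] using hω p p' d (by simpa [planted] using h)

lemma card_boundaryWindows_le (n k : ℕ) :
    #{ab ∈ range n ×ˢ range n | ab.1 = 0 ∨ ab.2 = 0 ∨ ab.1 + k = n ∨ ab.2 + k = n} ≤ 4 * n := by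
  have hsub : {ab ∈ range n ×ˢ range n | ab.1 = 0 ∨ ab.2 = 0 ∨ ab.1 + k = n ∨ ab.2 + k = n} ⊆
      {0} ×ˢ range n ∪ range n ×ˢ {0} ∪ {n - k} ×ˢ range n ∪ range n ×ˢ {n - k} := by
    intro ab hab
    simp only [mem_filter, mem_product, mem_range] at hab
    simp only [mem_union, mem_product, mem_singleton, mem_range]
    omega
  refine (card_le_card hsub).trans <| (card_union_le _ _).trans ?_
  grw [card_union_le, card_union_le]
  simp
  omega

lemma card_not_kGood_planted_mul_le (hι : Function.Involutive ι) {k : ℕ} (hk : 0 < k) :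
    #{ω : Carving n q | IsValidCarving ι ω ∧ ¬KGood ι (planted n) ω k} * q ^ 3 ≤
      (n ^ 2 * (8 * k ^ 4) ^ 3 + 4 * n * (8 * k ^ 4) ^ 2 * q) *
        #{ω : Carving n q | IsValidCarving ι ω} := by
  set V := ({ω | IsValidCarving ι ω} : Finset (Carving n q))
  set Bad : ℕ → ℕ × ℕ → Finset (Carving n q) :=
    fun t ab => {ω | IsValidCarving ι ω ∧ t ≤ windowSM ι (planted n) ω ab.1 ab.2 k}
  set R := range n ×ˢ range n
  set Bd := {ab ∈ R | ab.1 = 0 ∨ ab.2 = 0 ∨ ab.1 + k = n ∨ ab.2 + k = n}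
  have hcover : ({ω | IsValidCarving ι ω ∧ ¬KGood ι (planted n) ω k} : Finset (Carving n q)) ⊆
      R.biUnion (Bad 3) ∪ Bd.biUnion (Bad 2) := by
    intro ω hω
    simp only [mem_filter, mem_univ, true_and] at hω
    obtain ⟨hvalid, hbad⟩ := hω
    simp only [KGood, hvalid.feasible_planted, true_and, not_forall] at hbad
    obtain ⟨a, b, ha, hb, hwin⟩ := hbad
    have hR : (a, b) ∈ R := by simp only [R, mem_product, mem_range]; omega
    simp only [Bad, Bd, mem_union, mem_biUnion, mem_filter, mem_univ, true_and, Prod.exists]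
    by_cases h2 : windowSM ι (planted n) ω a b k ≤ 2
    · exact Or.inr ⟨a, b, ⟨hR, by tauto⟩, hvalid, by omega⟩
    · exact Or.inl ⟨a, b, hR, hvalid, by omega⟩
  have hR : #R = n ^ 2 := by simp [R, card_product, sq]
  calc _ ≤ (∑ ab ∈ R, #(Bad 3 ab) + ∑ ab ∈ Bd, #(Bad 2 ab)) * q ^ 3 := by
        gcongr
        exact (card_le_card hcover).trans <| (card_union_le _ _).trans <|
          add_le_add card_biUnion_le card_biUnion_le
    _ = ∑ ab ∈ R, #(Bad 3 ab) * q ^ 3 + (∑ ab ∈ Bd, #(Bad 2 ab) * q ^ 2) * q := by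
        rw [add_mul, sum_mul, sum_mul, sum_mul]
        congr 1
        exact sum_congr rfl fun _ _ => by ring
    _ ≤ ∑ _ab ∈ R, (8 * k ^ 4) ^ 3 * #V + (∑ _ab ∈ Bd, (8 * k ^ 4) ^ 2 * #V) * q := by
        refine add_le_add (sum_le_sum fun ab _ => ?_)
          (Nat.mul_le_mul_right _ (sum_le_sum fun ab _ => ?_))
        · exact card_le_windowSM_mul_le hι 3 ab.1 ab.2 k
        · exact card_le_windowSM_mul_le hι 2 ab.1 ab.2 k
    _ ≤ n ^ 2 * ((8 * k ^ 4) ^ 3 * #V) + (4 * n * ((8 * k ^ 4) ^ 2 * #V)) * q := by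
        simp only [sum_const, smul_eq_mul, hR]
        gcongr
        exact card_boundaryWindows_le n k
    _ = _ := by ring

lemma exists_isValidCarving (hι : Function.Involutive ι) (hq : 0 < q) :
    ∃ ω : Carving n q, IsValidCarving ι ω := by
  have hswap : ∀ d : ZMod 4, (d + 2 = 0 ∨ d + 2 = 1) ↔ ¬(d = 0 ∨ d = 1) := by decide
  refine ⟨fun _ d => if d = 0 ∨ d = 1 then ⟨0, hq⟩ else ι ⟨0, hq⟩, fun p p' d _ => ?_⟩
  by_cases h : d = 0 ∨ d = 1
  · simp only [h, if_true, (hswap d).not_left.2 h, if_false]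
  · simp only [h, if_false, (hswap d).2 h, if_true, hι _]

lemma card_isValidCarving_pos (hι : Function.Involutive ι) (hq : 0 < q) :
    0 < #{ω : Carving n q | IsValidCarving ι ω} := by
  obtain ⟨ω, hω⟩ := exists_isValidCarving (n := n) hι hq
  exact card_pos.2 ⟨ω, mem_filter.2 ⟨mem_univ _, hω⟩⟩

lemma one_sub_puzzleProb (hV : 0 < #{ω : Carving n q | IsValidCarving ι ω})
    (P : Carving n q → Prop) :
    1 - puzzleProb ι P =
      (#{ω : Carving n q | IsValidCarving ι ω ∧ ¬P ω} : ℝ) /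
        #{ω : Carving n q | IsValidCarving ι ω} := by
  have hV' : (#{ω : Carving n q | IsValidCarving ι ω} : ℝ) ≠ 0 := by positivity
  have hsplit := card_filter_add_card_filter_not (s := {ω : Carving n q | IsValidCarving ι ω}) P
  rw [filter_filter, filter_filter] at hsplit
  rw [puzzleProb, eq_div_iff hV', sub_mul, div_mul_cancel₀ _ hV', ← hsplit]
  push_cast
  ring

lemma puzzleProb_le_one (P : Carving n q → Prop) : puzzleProb ι P ≤ 1 :=
  div_le_one_of_le₀ (Nat.cast_le.2 (card_le_card (monotone_filter_right _ fun _ _ h => h.1)))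
    (Nat.cast_nonneg _)

noncomputable def failureBound (n q k : ℕ) : ℝ :=
  ((n : ℝ) ^ 2 * (8 * k ^ 4) ^ 3 + 4 * n * (8 * k ^ 4) ^ 2 * q) / q ^ 3

lemma one_sub_puzzleProb_kGood_planted_le (hι : Function.Involutive ι) (hq : 0 < q) {k : ℕ}
    (hk : 0 < k) :
    1 - puzzleProb ι (fun ω : Carving n q => KGood ι (planted n) ω k) ≤ failureBound n q k := by
  have hV := card_isValidCarving_pos (n := n) hι hq
  rw [one_sub_puzzleProb hV, failureBound, div_le_div_iff₀ (by positivity) (by positivity)]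
  exact_mod_cast card_not_kGood_planted_mul_le hι hk

lemma tendsto_pow_twelve_div_of_tendsto {k : ℕ → ℕ}
    (hk : Tendsto (fun n => (k n : ℝ) / (n : ℝ) ^ ((1 : ℝ) / 12)) atTop (nhds 0)) :
    Tendsto (fun n => (k n : ℝ) ^ 12 / n) atTop (nhds 0) := by
  have hroot : ∀ n : ℕ, ((n : ℝ) ^ ((1 : ℝ) / 12)) ^ 12 = n := fun n => by
    rw [← Real.rpow_natCast, ← Real.rpow_mul (Nat.cast_nonneg n)]
    norm_num
  have h12 := hk.pow 12
  rw [zero_pow (by norm_num)] at h12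
  simpa only [div_pow, hroot] using h12

lemma failureBound_le {c : ℝ} (hc : 0 < c) {n q k : ℕ} (hn : 0 < n) (hk : 0 < k)
    (hq : c * n ≤ q) :
    failureBound n q k ≤ (512 / c ^ 3 + 256 / c ^ 2) * ((k : ℝ) ^ 12 / n) := by
  have hcn : 0 < c * n := by positivity
  have hq0 : (0 : ℝ) < q := hcn.trans_le hq
  have hk8 : (k : ℝ) ^ 8 ≤ (k : ℝ) ^ 12 := pow_le_pow_right₀ (by exact_mod_cast hk) (by norm_num)
  calc failureBound n q k
        = 512 * (n ^ 2 * (k : ℝ) ^ 12) / q ^ 3 + 256 * (n * (k : ℝ) ^ 8) / q ^ 2 := by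
        rw [failureBound]
        field_simp
        ring
    _ ≤ 512 * (n ^ 2 * (k : ℝ) ^ 12) / (c * n) ^ 3 + 256 * (n * (k : ℝ) ^ 12) / (c * n) ^ 2 := by
        gcongr
    _ = _ := by
        field_simp

end Estimates

/-- Let `c > 0` be fixed, `q = q(n) ≥ c·n`, and let `k = k(n)` be a
sequence of positive integers with `k = o(n^{1/12})`.  Then the probability that the
planted assembly of a random `n × n` puzzle with `q` jig types is `k`-good tends to `1`
as `n → ∞`. -/
theorem statement_7 (c : ℝ) (hc : 0 < c) (q : ℕ → ℕ) (ι : ∀ n, Fin (q n) → Fin (q n))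
    (hι : ∀ n, ι n ∘ ι n = id)
    (hq : ∀ n : ℕ, (c * n : ℝ) ≤ q n)
    (k : ℕ → ℕ) (hkpos : ∀ n, 0 < k n)
    (hko : Tendsto (fun n => (k n : ℝ) / (n : ℝ) ^ ((1 : ℝ) / 12)) atTop (nhds 0)) :
    Tendsto (fun n =>
        puzzleProb (ι n) fun ω : Carving n (q n) => KGood (ι n) (planted n) ω (k n))
      atTop (nhds 1) := by
  have hinv : ∀ n, Function.Involutive (ι n) := fun n => congrFun (hι n)
  have hest : ∀ᶠ n in atTop,
      0 ≤ 1 - puzzleProb (ι n) (fun ω : Carving n (q n) => KGood (ι n) (planted n) ω (k n)) ∧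
      1 - puzzleProb (ι n) (fun ω : Carving n (q n) => KGood (ι n) (planted n) ω (k n)) ≤
        (512 / c ^ 3 + 256 / c ^ 2) * ((k n : ℝ) ^ 12 / n) := by
    filter_upwards [eventually_gt_atTop 0,
      (tendsto_natCast_atTop_atTop.const_mul_atTop hc).eventually_ge_atTop 1] with n hn hcn
    have hq0 : 0 < q n := Nat.cast_pos.1 (one_pos.trans_le (hcn.trans (hq n)))
    exact ⟨sub_nonneg.2 (puzzleProb_le_one _),
      (one_sub_puzzleProb_kGood_planted_le (hinv n) hq0 (hkpos n)).trans
        (failureBound_le hc hn (hkpos n) (hq n))⟩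
  have hsmall := (tendsto_pow_twelve_div_of_tendsto hko).const_mul (512 / c ^ 3 + 256 / c ^ 2)
  rw [mul_zero] at hsmall
  have hfail := squeeze_zero' (hest.mono fun _ h => h.1) (hest.mono fun _ h => h.2) hsmall
  simpa using hfail.const_sub 1
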